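/- arXiv:2412.07017 — 2 statements merged into one kernel-verified Lean document; each statement's English description precedes it below -/
import Mathlib

section
/- For a list of functions with positive generation latencies G and positive execution times E, among all orderings σ of the list, any ordering sorted in nonincreasing execution time (LPT order) minimizes the makespan max_i ((∑_{j=1}^{i} G(σ(j))) + E(σ(i))). -/
/-- Among all orderings (permutations) of `n` functions with positive generation
latencies and positive execution times, any ordering sorted in nonincreasing
execution time (LPT order) minimizes the makespan
`max_i ((∑_{j=1}^i G (σ j)) + E (σ i))`. -/
theorem lpt_minimizes_makespan (n : ℕ) (hn : 0 < n) (G E : Fin n → ℝ)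
    (hG : ∀ i, 0 < G i) (hE : ∀ i, 0 < E i)
    (τ : Equiv.Perm (Fin n)) (hτ : ∀ i j : Fin n, i ≤ j → E (τ j) ≤ E (τ i)) :
    ∀ σ : Equiv.Perm (Fin n),
      (Finset.univ.sup' (Finset.univ_nonempty_iff.mpr ⟨⟨0, hn⟩⟩)
          (fun i : Fin n =>
            (∑ j ∈ Finset.univ.filter (fun j : Fin n => j ≤ i), G (τ j)) + E (τ i)))
        ≤ (Finset.univ.sup' (Finset.univ_nonempty_iff.mpr ⟨⟨0, hn⟩⟩)
            (fun i : Fin n =>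
              (∑ j ∈ Finset.univ.filter (fun j : Fin n => j ≤ i), G (σ j)) + E (σ i))) := by
  intro σ
  apply Finset.sup'_le
  intro i _
  -- S : the items scheduled in the first i+1 positions of τ
  set S : Finset (Fin n) := (Finset.univ.filter (fun j : Fin n => j ≤ i)).image τ with hS
  -- T : their positions under σ
  set T : Finset (Fin n) := S.image σ.symm with hT
  have hTne : T.Nonempty := by
    refine ⟨σ.symm (τ i), ?_⟩
    simp only [hT, Finset.mem_image]
    exact ⟨τ i, by simp [hS, Finset.mem_image], rfl⟩
  set k := T.max' hTne with hk
  have hkT : k ∈ T := T.max'_mem hTne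
  -- σ k ∈ S
  obtain ⟨s, hsS, hsk⟩ := Finset.mem_image.mp hkT
  have hσk : σ k = s := by rw [← hsk]; simp
  obtain ⟨j₀, hj₀, hj₀s⟩ := Finset.mem_image.mp hsS
  have hj₀i : j₀ ≤ i := (Finset.mem_filter.mp hj₀).2
  refine le_trans ?_ (Finset.le_sup' _ (Finset.mem_univ k))
  have hE' : E (τ i) ≤ E (σ k) := by
    rw [hσk, ← hj₀s]; exact hτ j₀ i hj₀i
  have hGsum : (∑ j ∈ Finset.univ.filter (fun j : Fin n => j ≤ i), G (τ j))
      ≤ ∑ j ∈ Finset.univ.filter (fun j : Fin n => j ≤ k), G (σ j) := by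
    have h1 : (∑ j ∈ Finset.univ.filter (fun j : Fin n => j ≤ i), G (τ j))
        = ∑ s ∈ S, G s := by
      rw [hS, Finset.sum_image (fun a _ b _ h => τ.injective h)]
    have h2 : (∑ s ∈ S, G s) = ∑ j ∈ T, G (σ j) := by
      rw [hT, Finset.sum_image (fun a _ b _ h => σ.symm.injective h)]
      simp
    rw [h1, h2]
    apply Finset.sum_le_sum_of_subset_of_nonneg
    · intro t ht
      simp only [Finset.mem_filter, Finset.mem_univ, true_and]
      exact T.le_max' t ht
    · intro j _ _; exact (hG _).le
  exact add_le_add hGsum hE'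
end

section
/- In the scheduling model with completion times C_σ(i) = (∑_{j≤i} G(σ(j))) + E(σ(i)), the makespan of an LPT ordering equals min over all permutations σ of makespan(σ); that is, the LPT makespan is a lower bound witness: for every permutation σ, makespan(σ) ≥ makespan(σ_LPT), where σ_LPT sorts functions by nonincreasing E. -/
/-- The makespan of an LPT ordering `τ` (nonincreasing execution times) is a
lower bound on the makespan of every permutation `σ`, hence the LPT makespan
equals the minimum makespan over all permutations. -/
theorem lpt_makespan_is_min (n : ℕ) (hn : 0 < n) (G E : Fin n → ℝ)
    (hG : ∀ i, 0 < G i) (hE : ∀ i, 0 < E i)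
    (τ : Equiv.Perm (Fin n)) (hτ : ∀ i j : Fin n, i ≤ j → E (τ j) ≤ E (τ i))
    (σ : Equiv.Perm (Fin n)) :
    (Finset.univ.sup' (Finset.univ_nonempty_iff.mpr ⟨⟨0, hn⟩⟩)
        (fun i : Fin n =>
          (∑ j ∈ Finset.univ.filter (fun j : Fin n => j ≤ i), G (τ j)) + E (τ i)))
      ≤ (Finset.univ.sup' (Finset.univ_nonempty_iff.mpr ⟨⟨0, hn⟩⟩)
          (fun i : Fin n =>
            (∑ j ∈ Finset.univ.filter (fun j : Fin n => j ≤ i), G (σ j)) + E (σ i))) := by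
  apply Finset.sup'_le
  intro i _
  set A : Finset (Fin n) := (Finset.univ.filter (fun j : Fin n => j ≤ i)).image τ with hA
  have hAne : A.Nonempty := ⟨τ i, Finset.mem_image_of_mem _ (by simp)⟩
  set B : Finset (Fin n) := A.image σ.symm with hB
  have hBne : B.Nonempty := hAne.image _
  set i' := B.max' hBne with hi'
  have hi'B : i' ∈ B := Finset.max'_mem _ _
  obtain ⟨f, hfA, hfi'⟩ := Finset.mem_image.mp hi'B
  have hσi' : σ i' = f := by rw [← hfi']; simp
  obtain ⟨k, hk, hkf⟩ := Finset.mem_image.mp hfA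
  have hki : k ≤ i := by
    simpa using (Finset.mem_filter.mp hk).2
  have hEle : E (τ i) ≤ E (σ i') := by rw [hσi', ← hkf]; exact hτ k i hki
  have hsum : (∑ j ∈ Finset.univ.filter (fun j : Fin n => j ≤ i), G (τ j))
      ≤ ∑ j ∈ Finset.univ.filter (fun j : Fin n => j ≤ i'), G (σ j) := by
    have h1 : (∑ j ∈ Finset.univ.filter (fun j : Fin n => j ≤ i), G (τ j))
        = ∑ f ∈ A, G f := by
      rw [hA, Finset.sum_image (fun a _ b _ h => τ.injective h)]
    have h2 : (∑ f ∈ A, G f) = ∑ j ∈ B, G (σ j) := by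
      rw [hB, Finset.sum_image (fun a _ b _ h => σ.symm.injective h)]
      simp
    have h3 : B ⊆ Finset.univ.filter (fun j : Fin n => j ≤ i') := by
      intro j hj
      simp only [Finset.mem_filter, Finset.mem_univ, true_and]
      exact Finset.le_max' _ _ hj
    rw [h1, h2]
    exact Finset.sum_le_sum_of_subset_of_nonneg h3 (fun j _ _ => (hG (σ j)).le)
  calc (∑ j ∈ Finset.univ.filter (fun j : Fin n => j ≤ i), G (τ j)) + E (τ i)
      ≤ (∑ j ∈ Finset.univ.filter (fun j : Fin n => j ≤ i'), G (σ j)) + E (σ i') :=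
        add_le_add hsum hEle
    _ ≤ _ := Finset.le_sup' (fun i : Fin n => (∑ j ∈ Finset.univ.filter (fun j : Fin n => j ≤ i), G (σ j)) + E (σ i)) (Finset.mem_univ i')
end
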